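/- Let Λ(0) = (1/t_f)(−I + Σ₀^{-1/2}(Σ₀^{1/2}Σ_fΣ₀^{1/2})^{1/2}Σ₀^{-1/2}) and M = Λ(0)^{-1}Σ₀^{-1}Λ(0)^{-1}, assuming Λ(0) is invertible. Then Σ(t) = (Λ(0)^{-1} + tI) M^{-1} (Λ(0)^{-1} + tI) satisfies the boundary conditions Σ(0) = Σ₀ and Σ(t_f) = Σ_f. -/

import Mathlib

set_option autoImplicit false
open Matrix
noncomputable section

/-- The old Mathlib `Matrix.PosSemidef.sqrt` (removed upstream), with its original definition. -/
noncomputable def Matrix.PosSemidef.sqrt {m : Type*} [Fintype m] [DecidableEq m]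
    {A : Matrix m m ℝ} (hA : A.PosSemidef) : Matrix m m ℝ :=
  hA.1.eigenvectorUnitary.1 * diagonal ((√·) ∘ hA.1.eigenvalues) *
    (star hA.1.eigenvectorUnitary : Matrix m m ℝ)

theorem Matrix.PosSemidef.posSemidef_sqrt {m : Type*} [Fintype m] [DecidableEq m]
    {A : Matrix m m ℝ} (hA : A.PosSemidef) : hA.sqrt.PosSemidef := by
  unfold Matrix.PosSemidef.sqrt
  have hs : star (hA.1.eigenvectorUnitary : Matrix m m ℝ)
      = (hA.1.eigenvectorUnitary : Matrix m m ℝ)ᴴ := rfl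
  rw [hs]
  apply Matrix.PosSemidef.mul_mul_conjTranspose_same
  rw [Matrix.posSemidef_diagonal_iff]
  intro i
  exact Real.sqrt_nonneg _

/-- The middle matrix `Σ₀^{1/2} Σf Σ₀^{1/2}` is positive semidefinite. -/
theorem midPosSemidef {n : ℕ} {S0 Sf : Matrix (Fin n) (Fin n) ℝ}
    (h0 : S0.PosDef) (hf : Sf.PosDef) :
    (h0.posSemidef.sqrt * Sf * h0.posSemidef.sqrt).PosSemidef := by
  have h := hf.posSemidef.mul_mul_conjTranspose_same h0.posSemidef.sqrt
  rwa [h0.posSemidef.posSemidef_sqrt.isHermitian] at h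

/-- `Λ(0) = (1/t_f)(−I + Σ₀^{-1/2}(Σ₀^{1/2}ΣfΣ₀^{1/2})^{1/2}Σ₀^{-1/2})`. -/
noncomputable def lam0 {n : ℕ} {S0 Sf : Matrix (Fin n) (Fin n) ℝ}
    (h0 : S0.PosDef) (hf : Sf.PosDef) (tf : ℝ) : Matrix (Fin n) (Fin n) ℝ :=
  (1 / tf) • (-1 + (h0.posSemidef.sqrt)⁻¹ * (midPosSemidef h0 hf).sqrt
    * (h0.posSemidef.sqrt)⁻¹)

/-- `M = Λ(0)^{-1} Σ₀^{-1} Λ(0)^{-1}`. -/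
noncomputable def Mmat {n : ℕ} {S0 Sf : Matrix (Fin n) (Fin n) ℝ}
    (h0 : S0.PosDef) (hf : Sf.PosDef) (tf : ℝ) : Matrix (Fin n) (Fin n) ℝ :=
  (lam0 h0 hf tf)⁻¹ * S0⁻¹ * (lam0 h0 hf tf)⁻¹

/-!
Since `M⁻¹ = Λ Σ₀ Λ`, the curve factors as `Σ(t) = (I + tΛ) Σ₀ (I + tΛ)`, which is `Σ₀` at `t = 0`.
At `t = t_f` the factor is `I + t_f Λ = s⁻¹ q s⁻¹` with `s = Σ₀^{1/2}` and `q = (s Σ_f s)^{1/2}`,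
so `Σ(t_f) = s⁻¹ q (s⁻¹ Σ₀ s⁻¹) q s⁻¹ = s⁻¹ q² s⁻¹ = Σ_f`.
-/

namespace Matrix

variable {m : Type*} [Fintype m] [DecidableEq m]

theorem PosSemidef.sqrt_mul_self {A : Matrix m m ℝ} (hA : A.PosSemidef) :
    hA.sqrt * hA.sqrt = A := by
  set U : Matrix m m ℝ := hA.1.eigenvectorUnitary.1
  set D := diagonal ((√·) ∘ hA.1.eigenvalues)
  have hUU : star U * U = 1 := Unitary.star_mul_self_of_mem hA.1.eigenvectorUnitary.2
  have hDD : D * D = diagonal (RCLike.ofReal ∘ hA.1.eigenvalues) := by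
    rw [diagonal_mul_diagonal]
    congr 1
    funext i
    simp [Real.mul_self_sqrt (hA.eigenvalues_nonneg i)]
  calc hA.sqrt * hA.sqrt = U * (D * (star U * U) * D) * star U := by
        simp only [sqrt, Matrix.mul_assoc]; rfl
    _ = A := by
        rw [hUU, Matrix.mul_one, hDD]
        conv_rhs => rw [hA.1.spectral_theorem, Unitary.conjStarAlgAut_apply]

variable {R : Type*} [CommRing R]

theorem isUnit_det_of_mul_self_eq {s A : Matrix m m R} (h : s * s = A) (hA : IsUnit A.det) :
    IsUnit s.det :=
  isUnit_of_mul_isUnit_left (by rwa [← det_mul, h])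

theorem inv_mul_inv_mul_inv_inv {L S : Matrix m m R} (hL : IsUnit L.det) (hS : IsUnit S.det) :
    (L⁻¹ * S⁻¹ * L⁻¹)⁻¹ = L * S * L := by
  rw [mul_inv_rev, mul_inv_rev, nonsing_inv_nonsing_inv _ hL, nonsing_inv_nonsing_inv _ hS,
    Matrix.mul_assoc]

theorem inv_add_smul_one_mul_mul_mul {L : Matrix m m R} (hL : IsUnit L.det) (S : Matrix m m R)
    (t : R) : (L⁻¹ + t • 1) * (L * S * L) * (L⁻¹ + t • 1) = (1 + t • L) * S * (1 + t • L) := by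
  have h_left : (L⁻¹ + t • 1) * L = 1 + t • L := by
    rw [Matrix.add_mul, nonsing_inv_mul _ hL, Matrix.smul_mul, Matrix.one_mul]
  have h_right : L * (L⁻¹ + t • 1) = 1 + t • L := by
    rw [Matrix.mul_add, mul_nonsing_inv _ hL, Matrix.mul_smul, Matrix.mul_one]
  calc (L⁻¹ + t • 1) * (L * S * L) * (L⁻¹ + t • 1)
      = ((L⁻¹ + t • 1) * L) * S * (L * (L⁻¹ + t • 1)) := by simp only [Matrix.mul_assoc]
    _ = (1 + t • L) * S * (1 + t • L) := by rw [h_left, h_right]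

theorem inv_mul_mul_inv_conj_eq_of_mul_self {s q S₀ S_f : Matrix m m R} (hs : IsUnit s.det) (hss : s * s = S₀)
    (hqq : q * q = s * S_f * s) : (s⁻¹ * q * s⁻¹) * S₀ * (s⁻¹ * q * s⁻¹) = S_f :=
  calc (s⁻¹ * q * s⁻¹) * S₀ * (s⁻¹ * q * s⁻¹)
      = s⁻¹ * q * (s⁻¹ * s) * (s * s⁻¹) * q * s⁻¹ := by simp only [← hss, Matrix.mul_assoc]
    _ = s⁻¹ * (q * q) * s⁻¹ := by
        rw [nonsing_inv_mul _ hs, mul_nonsing_inv _ hs]; simp only [Matrix.mul_one, Matrix.mul_assoc]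
    _ = S_f := by
        rw [hqq, ← Matrix.mul_assoc, ← Matrix.mul_assoc, nonsing_inv_mul _ hs, Matrix.one_mul,
          mul_nonsing_inv_cancel_right _ _ hs]

end Matrix

theorem one_add_smul_lam0 {n : ℕ} {S0 Sf : Matrix (Fin n) (Fin n) ℝ} (h0 : S0.PosDef)
    (hf : Sf.PosDef) {tf : ℝ} (htf : tf ≠ 0) :
    1 + tf • lam0 h0 hf tf =
      (h0.posSemidef.sqrt)⁻¹ * (midPosSemidef h0 hf).sqrt * (h0.posSemidef.sqrt)⁻¹ := by
  rw [lam0, smul_smul, mul_one_div_cancel htf, one_smul, add_neg_cancel_left]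

theorem stmt5_general {n : ℕ} (S0 Sf : Matrix (Fin n) (Fin n) ℝ)
    (h0 : S0.PosDef) (hf : Sf.PosDef) (tf : ℝ) (htf : 0 < tf)
    (hinv : IsUnit (lam0 h0 hf tf)) :
    (((lam0 h0 hf tf)⁻¹ + (0 : ℝ) • 1) * (Mmat h0 hf tf)⁻¹
        * ((lam0 h0 hf tf)⁻¹ + (0 : ℝ) • 1) = S0) ∧
    (((lam0 h0 hf tf)⁻¹ + tf • 1) * (Mmat h0 hf tf)⁻¹
        * ((lam0 h0 hf tf)⁻¹ + tf • 1) = Sf) := by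
  have hL : IsUnit (lam0 h0 hf tf).det := (isUnit_iff_isUnit_det _).mp hinv
  have hS0 : IsUnit S0.det := (isUnit_iff_isUnit_det _).mp h0.isUnit
  have hs : IsUnit h0.posSemidef.sqrt.det :=
    isUnit_det_of_mul_self_eq h0.posSemidef.sqrt_mul_self hS0
  rw [Mmat, inv_mul_inv_mul_inv_inv hL hS0, inv_add_smul_one_mul_mul_mul hL,
    inv_add_smul_one_mul_mul_mul hL, zero_smul, add_zero, Matrix.one_mul, Matrix.mul_one,
    one_add_smul_lam0 h0 hf htf.ne']
  exact ⟨rfl, inv_mul_mul_inv_conj_eq_of_mul_self hs h0.posSemidef.sqrt_mul_self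
    (midPosSemidef h0 hf).sqrt_mul_self⟩

/-- `Σ(t) = (Λ(0)^{-1} + tI) M^{-1} (Λ(0)^{-1} + tI)` satisfies
`Σ(0) = Σ₀` and `Σ(t_f) = Σf`. -/
theorem stmt5 {n : ℕ} (S0 Sf : Matrix (Fin n) (Fin n) ℝ)
    (h0 : S0.PosDef) (hf : Sf.PosDef) (tf : ℝ) (htf : 0 < tf) (hne : S0 ≠ Sf)
    (hinv : IsUnit (lam0 h0 hf tf)) :
    (((lam0 h0 hf tf)⁻¹ + (0 : ℝ) • 1) * (Mmat h0 hf tf)⁻¹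
        * ((lam0 h0 hf tf)⁻¹ + (0 : ℝ) • 1) = S0) ∧
    (((lam0 h0 hf tf)⁻¹ + tf • 1) * (Mmat h0 hf tf)⁻¹
        * ((lam0 h0 hf tf)⁻¹ + tf • 1) = Sf) :=
  stmt5_general S0 Sf h0 hf tf htf hinv
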